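/- Let q=2 and suppose \ell < s with \ell \le \langle x,y\rangle \le s for all distinct x,y in a 2-design C \subseteq \mathbb{H}(n,2) of cardinality M. Let h be convex on [\ell, s]. Then E(n,C;h) \le \frac{(M-1)(s\,h(\ell) - \ell\, h(s)) + h(\ell) - h(s)}{s - \ell}. -/

import Mathlib

/-- Hamming distance between two binary words. -/
def hammingDist' {n : ℕ} (x y : Fin n → Fin 2) : ℕ :=
  (Finset.univ.filter fun i => x i ≠ y i).card

/-- "Inner product" `⟨x,y⟩ = 1 - 2 d(x,y)/n`. -/
noncomputable def innerProd {n : ℕ} (x y : Fin n → Fin 2) : ℝ :=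
  1 - 2 * (hammingDist' x y : ℝ) / (n : ℝ)

/-! The secant line `g` through `(l, h l)` and `(s, h s)` dominates `h` on `[l, s]` by convexity.
Since `g` is affine, its sum over the ordered pairs of distinct codewords only involves
`∑ ⟨x,y⟩` over all pairs, which vanishes for a design, and the diagonal terms `⟨x,x⟩ = 1`. -/

open Finset

theorem ConvexOn.sub_mul_le_secant {f : ℝ → ℝ} {l s t : ℝ} (hf : ConvexOn ℝ (Set.Icc l s) f)
    (ht : t ∈ Set.Icc l s) : (s - l) * f t ≤ (s - t) * f l + (t - l) * f s := by
  have hl : l ∈ Set.Icc l s := ⟨le_rfl, ht.1.trans ht.2⟩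
  have hs : s ∈ Set.Icc l s := ⟨ht.1.trans ht.2, le_rfl⟩
  rcases ht.1.eq_or_lt with rfl | hlt
  · linarith
  rcases ht.2.eq_or_lt with rfl | hts
  · linarith
  exact hf.secant_mono_aux1 hl hs hlt hts

theorem Finset.sum_sum_sdiff_singleton {α β : Type*} [DecidableEq α] [AddCommGroup β]
    (C : Finset α) (f : α → α → β) :
    ∑ x ∈ C, ∑ y ∈ C \ {x}, f x y = ∑ x ∈ C, ∑ y ∈ C, f x y - ∑ x ∈ C, f x x := by
  rw [← sum_sub_distrib]
  refine sum_congr rfl fun x hx => ?_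
  rw [sum_sdiff_eq_sub (singleton_subset_iff.2 hx), sum_singleton]

@[simp]
theorem innerProd_self {n : ℕ} (x : Fin n → Fin 2) : innerProd x x = 1 := by
  simp [innerProd, hammingDist']

theorem sum_sum_sdiff_singleton_affine_innerProd {n : ℕ} (C : Finset (Fin n → Fin 2))
    (hC : ∑ x ∈ C, ∑ y ∈ C, innerProd x y = 0) (a b : ℝ) :
    ∑ x ∈ C, ∑ y ∈ C \ {x}, (a + b * innerProd x y) = a * (#C * (#C - 1)) - b * #C := by
  rw [sum_sum_sdiff_singleton]
  simp only [sum_add_distrib, ← mul_sum, hC, innerProd_self,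
    sum_const, nsmul_eq_mul]
  ring

theorem stmt_11_general (n M : ℕ)
    (C : Finset (Fin n → Fin 2)) (hC : C.card = M) (hM : 1 ≤ M)
    (h : ℝ → ℝ) (l s : ℝ) (hls : l < s)
    (hrange : ∀ x ∈ C, ∀ y ∈ C, x ≠ y → innerProd x y ∈ Set.Icc l s)
    (hconv : ConvexOn ℝ (Set.Icc l s) h)
    -- 2-design conditions `∑_{x,y∈C} Q_i(⟨x,y⟩) = 0` for `i = 1, 2`
    -- (for `q = 2`: `Q_1(t) = t` and `Q_2(t)` is proportional to `n t² - 1`):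
    (hdes1 : ∑ x ∈ C, ∑ y ∈ C, innerProd x y = 0) :
    (1 / (M : ℝ)) * ∑ x ∈ C, ∑ y ∈ C \ {x}, h (innerProd x y) ≤
      (((M : ℝ) - 1) * (s * h l - l * h s) + h l - h s) / (s - l) := by
  have hsecant : (s - l) * ∑ x ∈ C, ∑ y ∈ C \ {x}, h (innerProd x y) ≤
      ∑ x ∈ C, ∑ y ∈ C \ {x}, ((s * h l - l * h s) + (h s - h l) * innerProd x y) := by
    rw [mul_sum]
    refine sum_le_sum fun x hx => ?_
    rw [mul_sum]
    refine sum_le_sum fun y hy => ?_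
    obtain ⟨hyC, hyx⟩ := mem_sdiff.1 hy
    have := hconv.sub_mul_le_secant (hrange x hx y hyC (Ne.symm (by simpa using hyx)))
    linarith
  rw [sum_sum_sdiff_singleton_affine_innerProd C hdes1, hC] at hsecant
  have hM0 : (0 : ℝ) < M := by exact_mod_cast hM
  rw [one_div, inv_mul_eq_div, div_le_div_iff₀ hM0 (sub_pos.2 hls)]
  nlinarith

theorem stmt_11 (n M : ℕ) (hn : 1 ≤ n)
    (C : Finset (Fin n → Fin 2)) (hC : C.card = M) (hM : 1 ≤ M)
    (h : ℝ → ℝ) (l s : ℝ) (hls : l < s)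
    (hrange : ∀ x ∈ C, ∀ y ∈ C, x ≠ y → innerProd x y ∈ Set.Icc l s)
    (hconv : ConvexOn ℝ (Set.Icc l s) h)
    -- 2-design conditions `∑_{x,y∈C} Q_i(⟨x,y⟩) = 0` for `i = 1, 2`
    -- (for `q = 2`: `Q_1(t) = t` and `Q_2(t)` is proportional to `n t² - 1`):
    (hdes1 : ∑ x ∈ C, ∑ y ∈ C, innerProd x y = 0)
    (hdes2 : ∑ x ∈ C, ∑ y ∈ C, ((n : ℝ) * (innerProd x y) ^ 2 - 1) = 0) :
    (1 / (M : ℝ)) * ∑ x ∈ C, ∑ y ∈ C \ {x}, h (innerProd x y) ≤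
      (((M : ℝ) - 1) * (s * h l - l * h s) + h l - h s) / (s - l) :=
  stmt_11_general n M C hC hM h l s hls hrange hconv hdes1
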